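/- Let $\{\chi_{k}\}_{k\geq 1}$ be the points (second coordinates) of a unit-rate Poisson process $\{(\sigma_k, \chi_k)\}$ on $\mathbb{R}_+^2$ restricted to $\sigma_k \leq 1$, and let $g : \mathbb{R}_+ \to [0,\infty)$ be measurable. Then $\mathbb{E}\left[\min\Big(1, \sum_k g(\chi_k)\mathbf{1}[\sigma_k \leq 1]\Big)\right] < \infty$ always, and this expectation is comparable within a factor of 2 to $\psi\left(\int_0^\infty \psi(g(y))\,dy\right)$ where $\psi(x) = 1 - e^{-x}$: specifically, $\psi\left(\int_0^\infty \psi(g(y))\,dy\right) \leq \mathbb{E}[\min(1, \eta g)] \leq 2\,\psi\left(\int_0^\infty \psi(g(y))\,dy\right)$, where $\eta g = \sum_k g(\chi_k)\mathbf{1}[\sigma_k \leq 1]$. -/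

import Mathlib

open MeasureTheory ProbabilityTheory Set
open scoped ENNReal NNReal

/-- Probability that a Poisson random variable with mean `r` equals `k`
(junk value for `r = ∞`). -/
noncomputable def poissonProb (r : ℝ≥0∞) (k : ℕ) : ℝ≥0∞ :=
  ENNReal.ofReal (Real.exp (-r.toReal) * r.toReal ^ k / (Nat.factorial k))

/-- `N` is a Poisson point process (random measure) on `E` with intensity
measure `μ`, under the probability measure `P`: counts of disjoint sets are
independent, and the count of any set of finite intensity is Poisson
distributed with the corresponding mean. -/
def IsPoissonPP {Ω E : Type*} [MeasurableSpace Ω] [MeasurableSpace E]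
    (P : Measure Ω) (μ : Measure E) (N : Ω → Measure E) : Prop :=
  (∀ A : Set E, MeasurableSet A → Measurable fun ω => N ω A) ∧
  (∀ A : Set E, MeasurableSet A → μ A ≠ ∞ → ∀ k : ℕ,
      P {ω | N ω A = (k : ℝ≥0∞)} = poissonProb (μ A) k) ∧
  (∀ (n : ℕ) (A : Fin n → Set E), (∀ i, MeasurableSet (A i)) →
      Pairwise (Function.onFun Disjoint A) →
      iIndepFun (fun i ω => N ω (A i)) P)

/-- `ψ(t) = 1 - e^{-t}`, extended to `ℝ≥0∞` by `ψ(∞) = 1`. -/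
noncomputable def epsi (t : ℝ≥0∞) : ℝ≥0∞ :=
  if t = ∞ then 1 else ENNReal.ofReal (1 - Real.exp (-t.toReal))

/-!
The Laplace functional of a Poisson process, `E[e^{-η f}] = e^{-∫ (1 - e^{-f}) dμ}`, holds for a
simple `f` with finite values and support of finite intensity: split `η f` over the level sets of
`f`, whose counts are independent Poisson variables, and use the Poisson generating function
`E[q^K] = e^{-(1-q) r}`. Monotone convergence, through spanning sets of finite intensity and the
continuity of `ψ = 1 - e^{-·}`, extends it to every measurable `f` as `E[ψ(η f)] = ψ(∫ ψ ∘ f dμ)`.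
For `f = g(y) 1[σ ≤ 1]` the right side is `ψ(∫₀^∞ ψ(g))`, and the theorem follows from the
pointwise bounds `ψ(x) ≤ min(1, x) ≤ 2 ψ(x)`.
-/

open Function

namespace ENNReal

/-- `e^{-t}`, taken through `EReal.exp` so that `e^{-∞} = 0` and continuity on `ℝ≥0∞` come
for free. -/
noncomputable def expNeg (t : ℝ≥0∞) : ℝ≥0∞ := EReal.exp (-(t : EReal))

@[simp] lemma expNeg_zero : expNeg 0 = 1 := by simp [expNeg]

@[simp] lemma expNeg_top : expNeg ∞ = 0 := by simp [expNeg]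

lemma expNeg_of_ne_top {t : ℝ≥0∞} (ht : t ≠ ∞) :
    expNeg t = ENNReal.ofReal (Real.exp (-t.toReal)) := by
  rw [expNeg, ← EReal.coe_ennreal_toReal ht, ← EReal.coe_neg, EReal.exp_coe]

lemma expNeg_add (a b : ℝ≥0∞) : expNeg (a + b) = expNeg a * expNeg b := by
  rw [expNeg, EReal.coe_ennreal_add, EReal.neg_add (by simp) (by simp), sub_eq_add_neg,
    EReal.exp_add]
  rfl

lemma expNeg_sum {ι : Type*} (s : Finset ι) (f : ι → ℝ≥0∞) :
    expNeg (∑ i ∈ s, f i) = ∏ i ∈ s, expNeg (f i) := by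
  classical
  induction s using Finset.induction_on with
  | empty => simp
  | insert i s hi ih => rw [Finset.sum_insert hi, Finset.prod_insert hi, expNeg_add, ih]

lemma expNeg_natCast_mul (n : ℕ) (t : ℝ≥0∞) : expNeg (n * t) = expNeg t ^ n := by
  induction n with
  | zero => simp
  | succ n ih => rw [Nat.cast_succ, add_one_mul, expNeg_add, ih, pow_succ]

lemma antitone_expNeg : Antitone expNeg := fun _ _ h =>
  EReal.exp_monotone (EReal.neg_le_neg_iff.2 (EReal.coe_ennreal_le_coe_ennreal_iff.2 h))

lemma expNeg_le_one (t : ℝ≥0∞) : expNeg t ≤ 1 := expNeg_zero ▸ antitone_expNeg (zero_le (a := t))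

lemma continuous_expNeg : Continuous expNeg :=
  ENNReal.continuous_exp.comp (continuous_neg.comp continuous_coe_ennreal_ereal)

end ENNReal

open ENNReal

lemma epsi_eq_one_sub_expNeg (t : ℝ≥0∞) : epsi t = 1 - expNeg t := by
  rcases eq_or_ne t ∞ with rfl | ht
  · simp [epsi]
  · rw [epsi, if_neg ht, expNeg_of_ne_top ht, ENNReal.ofReal_sub _ (Real.exp_nonneg _),
      ENNReal.ofReal_one]

@[simp] lemma epsi_zero : epsi 0 = 0 := by simp [epsi_eq_one_sub_expNeg]

lemma epsi_le_one (t : ℝ≥0∞) : epsi t ≤ 1 := by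
  rw [epsi_eq_one_sub_expNeg]; exact tsub_le_self

lemma monotone_epsi : Monotone epsi := fun _ _ h => by
  simp only [epsi_eq_one_sub_expNeg]; exact tsub_le_tsub_left (antitone_expNeg h) 1

lemma continuous_epsi : Continuous epsi := by
  simp only [funext epsi_eq_one_sub_expNeg]
  exact ENNReal.continuous_sub_left one_ne_top |>.comp continuous_expNeg

@[fun_prop]
lemma measurable_epsi : Measurable epsi := continuous_epsi.measurable

lemma epsi_iSup {ι : Sort*} (u : ι → ℝ≥0∞) : epsi (⨆ i, u i) = ⨆ i, epsi (u i) :=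
  monotone_epsi.map_iSup_of_continuousAt continuous_epsi.continuousAt epsi_zero

lemma epsi_le_self (t : ℝ≥0∞) : epsi t ≤ t := by
  rcases eq_or_ne t ∞ with rfl | ht
  · exact le_top
  rw [epsi, if_neg ht]
  refine ENNReal.ofReal_le_of_le_toReal ?_
  linarith [Real.add_one_le_exp (-t.toReal)]

lemma epsi_le_min_one (t : ℝ≥0∞) : epsi t ≤ min 1 t := le_min (epsi_le_one t) (epsi_le_self t)

lemma Real.exp_neg_le_one_sub_half {x : ℝ} (hx0 : 0 ≤ x) (hx1 : x ≤ 1) :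
    Real.exp (-x) ≤ 1 - x / 2 := by
  have hchord := convexOn_exp.2 (mem_univ 0) (mem_univ (-1)) (sub_nonneg.2 hx1) hx0
    (sub_add_cancel 1 x)
  simp only [smul_eq_mul, mul_zero, zero_add, mul_neg_one, Real.exp_zero, mul_one] at hchord
  nlinarith [Real.exp_neg_one_lt_half]

lemma half_le_epsi {t : ℝ≥0∞} (ht : t ≤ 1) : t / 2 ≤ epsi t := by
  have ht' : t ≠ ∞ := ne_top_of_le_ne_top one_ne_top ht
  have hx1 : t.toReal ≤ 1 := ENNReal.toReal_le_of_le_ofReal zero_le_one (by simpa using ht)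
  calc t / 2 = ENNReal.ofReal (t.toReal / 2) := by
        rw [ENNReal.ofReal_div_of_pos two_pos, ENNReal.ofReal_toReal ht', ENNReal.ofReal_ofNat]
    _ ≤ epsi t := by
        rw [epsi, if_neg ht']
        exact ENNReal.ofReal_le_ofReal
          (by linarith [Real.exp_neg_le_one_sub_half ENNReal.toReal_nonneg hx1])

lemma min_one_le_two_mul_epsi (t : ℝ≥0∞) : min 1 t ≤ 2 * epsi t := by
  rcases le_total t 1 with ht | ht
  · calc min 1 t = 2 * (t / 2) := by
          rw [min_eq_right ht, ENNReal.mul_div_cancel two_ne_zero ofNat_ne_top]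
      _ ≤ 2 * epsi t := by grw [half_le_epsi ht]
  · calc min 1 t = 2 * (1 / 2) := by
          rw [min_eq_left ht, ENNReal.mul_div_cancel two_ne_zero ofNat_ne_top]
      _ ≤ 2 * epsi t := by grw [half_le_epsi le_rfl, monotone_epsi ht]

lemma lintegral_epsi_eq_one_sub {Ω : Type*} [MeasurableSpace Ω] {P : Measure Ω}
    [IsProbabilityMeasure P] {X : Ω → ℝ≥0∞} (hX : Measurable X) :
    ∫⁻ ω, epsi (X ω) ∂P = 1 - ∫⁻ ω, expNeg (X ω) ∂P := by
  simp_rw [epsi_eq_one_sub_expNeg]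
  have hfin : ∫⁻ ω, expNeg (X ω) ∂P ≠ ∞ :=
    ne_top_of_le_ne_top (by simp) (lintegral_mono fun ω => expNeg_le_one (X ω))
  rw [lintegral_sub (g := fun ω => expNeg (X ω)) (continuous_expNeg.measurable.comp hX) hfin
      (ae_of_all _ fun ω => expNeg_le_one _), lintegral_one, measure_univ]

lemma tsum_poissonProb (r : ℝ≥0∞) : ∑' k, poissonProb r k = 1 := by
  have h := ProbabilityTheory.hasSum_one_poissonMeasure r.toNNReal
  rw [ENNReal.coe_toNNReal_eq_toReal] at h
  rw [← ENNReal.ofReal_one, ← h.tsum_eq,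
    ENNReal.ofReal_tsum_of_nonneg (fun _ => by positivity) h.summable]
  rfl

lemma expNeg_pow_mul_poissonProb {c r : ℝ≥0∞} (hc : c ≠ ∞) (hr : r ≠ ∞) (k : ℕ) :
    expNeg c ^ k * poissonProb r k = expNeg (epsi c * r) * poissonProb (expNeg c * r) k := by
  have hq : expNeg c = ENNReal.ofReal (Real.exp (-c.toReal)) := expNeg_of_ne_top hc
  have hψ : epsi c = ENNReal.ofReal (1 - Real.exp (-c.toReal)) := if_neg hc
  have hq1 : Real.exp (-c.toReal) ≤ 1 := Real.exp_le_one_iff.2 (neg_nonpos.2 toReal_nonneg)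
  rw [expNeg_of_ne_top (mul_ne_top (hψ ▸ ofReal_ne_top) hr), poissonProb, poissonProb,
    toReal_mul, toReal_mul, hq, hψ, toReal_ofReal (Real.exp_nonneg _),
    toReal_ofReal (sub_nonneg.2 hq1), ← ofReal_pow (Real.exp_nonneg _),
    ← ofReal_mul (by positivity), ← ofReal_mul (Real.exp_nonneg _)]
  congr 1
  rw [show Real.exp (-r.toReal) = Real.exp (-((1 - Real.exp (-c.toReal)) * r.toReal)) *
      Real.exp (-(Real.exp (-c.toReal) * r.toReal)) by rw [← Real.exp_add]; ring_nf]
  ring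

lemma tsum_expNeg_pow_mul_poissonProb {c r : ℝ≥0∞} (hc : c ≠ ∞) (hr : r ≠ ∞) :
    ∑' k, expNeg c ^ k * poissonProb r k = expNeg (epsi c * r) := by
  simp_rw [expNeg_pow_mul_poissonProb hc hr, ENNReal.tsum_mul_left,
    tsum_poissonProb, mul_one]

namespace IsPoissonPP

variable {Ω E : Type*} [MeasurableSpace Ω] [MeasurableSpace E]
  {P : Measure Ω} {μ : Measure E} {N : Ω → Measure E}

lemma measurable (hN : IsPoissonPP P μ N) : Measurable N :=
  Measure.measurable_of_measurable_coe N hN.1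

lemma measurable_lintegral (hN : IsPoissonPP P μ N) {F : E → ℝ≥0∞} (hF : Measurable F) :
    Measurable fun ω => ∫⁻ p, F p ∂N ω :=
  (Measure.measurable_lintegral hF).comp hN.measurable

lemma iIndepFun_apply (hN : IsPoissonPP P μ N) {ι : Type*} [Fintype ι] {A : ι → Set E}
    (hA : ∀ i, MeasurableSet (A i)) (hd : Pairwise (Disjoint on A)) :
    iIndepFun (fun i ω => N ω (A i)) P := by
  let e := Fintype.equivFin ι
  simpa [Function.comp_def] using
    (hN.2.2 _ (A ∘ e.symm) (fun i => hA _) (hd.comp_of_injective e.symm.injective)).precomp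
      e.injective

variable [IsProbabilityMeasure P]

lemma lintegral_comp_apply_eq_tsum (hN : IsPoissonPP P μ N) {A : Set E} (hA : MeasurableSet A)
    (hμA : μ A ≠ ∞) (f : ℝ≥0∞ → ℝ≥0∞) :
    ∫⁻ ω, f (N ω A) ∂P = ∑' k : ℕ, f k * poissonProb (μ A) k := by
  set S : ℕ → Set Ω := fun k => (fun ω => N ω A) ⁻¹' {(k : ℝ≥0∞)}
  have hS : ∀ k, MeasurableSet (S k) := fun k => hN.1 A hA (measurableSet_singleton _)
  have hSd : Pairwise (Disjoint on S) := fun k l hkl =>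
    (disjoint_singleton.2 (Nat.cast_injective.ne hkl)).preimage _
  have hPS : ∀ k, P (S k) = poissonProb (μ A) k := hN.2.1 A hA hμA
  have hcover : ∀ᵐ ω ∂P, ω ∈ ⋃ k, S k :=
    mem_ae_iff.2 <| (prob_compl_eq_zero_iff (MeasurableSet.iUnion hS)).2 <| by
      rw [measure_iUnion hSd hS, tsum_congr hPS, tsum_poissonProb]
  calc ∫⁻ ω, f (N ω A) ∂P = ∫⁻ ω in ⋃ k, S k, f (N ω A) ∂P := by
        rw [Measure.restrict_eq_self_of_ae_mem hcover]
    _ = ∑' k, ∫⁻ ω in S k, f (N ω A) ∂P := lintegral_iUnion hS hSd _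
    _ = ∑' k : ℕ, f k * poissonProb (μ A) k := tsum_congr fun k => by
        rw [setLIntegral_congr_fun (hS k) (fun ω (hω : N ω A = k) => by rw [hω]),
          setLIntegral_const, hPS]

lemma lintegral_expNeg_mul_apply (hN : IsPoissonPP P μ N) {A : Set E} (hA : MeasurableSet A)
    (hμA : μ A ≠ ∞) {c : ℝ≥0∞} (hc : c ≠ ∞) :
    ∫⁻ ω, expNeg (c * N ω A) ∂P = expNeg (epsi c * μ A) := by
  rw [hN.lintegral_comp_apply_eq_tsum hA hμA fun x => expNeg (c * x),
    ← tsum_expNeg_pow_mul_poissonProb hc hμA]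
  exact tsum_congr fun k => by rw [mul_comm c, expNeg_natCast_mul, mul_comm]

lemma lintegral_expNeg_sum_mul_apply (hN : IsPoissonPP P μ N) {ι : Type*} [Fintype ι]
    {A : ι → Set E} (hA : ∀ i, MeasurableSet (A i)) (hd : Pairwise (Disjoint on A))
    {c : ι → ℝ≥0∞} (hc : ∀ i, c i ≠ ∞) (hμA : ∀ i, c i ≠ 0 → μ (A i) ≠ ∞) :
    ∫⁻ ω, expNeg (∑ i, c i * N ω (A i)) ∂P = expNeg (∑ i, epsi (c i) * μ (A i)) := by
  have hmeas : ∀ i, Measurable fun ω => expNeg (c i * N ω (A i)) := fun i =>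
    continuous_expNeg.measurable.comp ((hN.1 _ (hA i)).const_mul _)
  have hindep : iIndepFun (fun i ω => expNeg (c i * N ω (A i))) P :=
    (hN.iIndepFun_apply hA hd).comp _ fun i =>
      continuous_expNeg.measurable.comp (measurable_id.const_mul (c i))
  simp_rw [expNeg_sum]
  rw [lintegral_prod_eq_prod_lintegral_of_indepFun _ _ hindep hmeas]
  refine Finset.prod_congr rfl fun i _ => ?_
  rcases eq_or_ne (c i) 0 with h0 | h0
  · simp [h0]
  · exact hN.lintegral_expNeg_mul_apply (hA i) (hμA i h0) (hc i)

lemma lintegral_epsi_lintegral_simpleFunc (hN : IsPoissonPP P μ N) (φ : SimpleFunc E ℝ≥0∞)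
    (hφ : ∀ p, φ p ≠ ∞) (hsupp : μ (support φ) ≠ ∞) :
    ∫⁻ ω, epsi (∫⁻ p, φ p ∂N ω) ∂P = epsi (∫⁻ p, epsi (φ p) ∂μ) := by
  have hA : ∀ x : φ.range, MeasurableSet (φ ⁻¹' {(x : ℝ≥0∞)}) := fun x =>
    φ.measurableSet_fiber x
  have hd : Pairwise (Disjoint on fun x : φ.range => φ ⁻¹' {(x : ℝ≥0∞)}) := fun x y hxy =>
    (disjoint_singleton.2 (Subtype.val_injective.ne hxy)).preimage _
  have hc : ∀ x : φ.range, (x : ℝ≥0∞) ≠ ∞ := fun ⟨x, hx⟩ => by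
    obtain ⟨p, rfl⟩ := SimpleFunc.mem_range.1 hx
    exact hφ p
  have hμA : ∀ x : φ.range, (x : ℝ≥0∞) ≠ 0 → μ (φ ⁻¹' {(x : ℝ≥0∞)}) ≠ ∞ := fun x hx =>
    ne_top_of_le_ne_top hsupp (measure_mono fun p (hp : φ p = x) => by rwa [mem_support, hp])
  have hN_sum : ∀ ω, ∫⁻ p, φ p ∂N ω = ∑ x : φ.range, x * N ω (φ ⁻¹' {(x : ℝ≥0∞)}) :=
      fun ω => by
    rw [SimpleFunc.lintegral_eq_lintegral, SimpleFunc.lintegral]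
    exact (Finset.sum_coe_sort φ.range fun x => x * N ω (φ ⁻¹' {x})).symm
  have hμ_sum : ∫⁻ p, epsi (φ p) ∂μ = ∑ x : φ.range, epsi x * μ (φ ⁻¹' {(x : ℝ≥0∞)}) := by
    rw [← lintegral_congr fun p => SimpleFunc.map_apply epsi φ p,
      SimpleFunc.lintegral_eq_lintegral, SimpleFunc.map_lintegral]
    exact (Finset.sum_coe_sort φ.range fun x => epsi x * μ (φ ⁻¹' {x})).symm
  rw [lintegral_epsi_eq_one_sub (hN.measurable_lintegral φ.measurable), epsi_eq_one_sub_expNeg]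
  simp_rw [hN_sum, hμ_sum]
  rw [hN.lintegral_expNeg_sum_mul_apply hA hd hc hμA]

theorem lintegral_epsi_lintegral [SigmaFinite μ] (hN : IsPoissonPP P μ N) {F : E → ℝ≥0∞}
    (hF : Measurable F) :
    ∫⁻ ω, epsi (∫⁻ p, F p ∂N ω) ∂P = epsi (∫⁻ p, epsi (F p) ∂μ) := by
  set φ : ℕ → SimpleFunc E ℝ≥0∞ := fun n => (SimpleFunc.eapprox F n).restrict (spanningSets μ n)
  have hφ_apply : ∀ n p, φ n p = (spanningSets μ n).indicator (SimpleFunc.eapprox F n) p :=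
    fun n => SimpleFunc.restrict_apply _ (measurableSet_spanningSets μ n)
  have hmono : Monotone fun n => ⇑(φ n) := fun n m hnm p => by
    simp only [hφ_apply]
    exact (indicator_le_indicator (SimpleFunc.monotone_eapprox F hnm p)).trans
      (indicator_le_indicator_of_subset (monotone_spanningSets μ hnm) (fun _ => by positivity) p)
  have hsup : ∀ p, ⨆ n, φ n p = F p := fun p => by
    refine le_antisymm (iSup_le fun n => ?_) ?_
    · rw [hφ_apply, ← SimpleFunc.iSup_eapprox_apply hF p]
      exact (indicator_le_self _ _ p).trans (le_iSup (fun n => SimpleFunc.eapprox F n p) n)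
    · rw [← SimpleFunc.iSup_eapprox_apply hF p]
      refine iSup_le fun n => le_iSup_of_le (max n (spanningSetsIndex μ p)) ?_
      rw [hφ_apply, indicator_of_mem (monotone_spanningSets μ (le_max_right _ _)
        (mem_spanningSetsIndex μ p))]
      exact SimpleFunc.monotone_eapprox F (le_max_left _ _) p
  have hφ_ne_top : ∀ n p, φ n p ≠ ∞ := fun n p => by
    rw [hφ_apply]
    exact ne_top_of_le_ne_top (SimpleFunc.eapprox_lt_top F n p).ne (indicator_le_self _ _ p)
  have hφ_supp : ∀ n, μ (support (φ n)) ≠ ∞ := fun n =>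
    ne_top_of_le_ne_top (measure_spanningSets_lt_top μ n).ne
      (measure_mono <| by
        rw [SimpleFunc.coe_restrict _ (measurableSet_spanningSets μ n)]
        exact support_indicator_subset)
  calc ∫⁻ ω, epsi (∫⁻ p, F p ∂N ω) ∂P = ∫⁻ ω, ⨆ n, epsi (∫⁻ p, φ n p ∂N ω) ∂P := by
        simp_rw [← epsi_iSup, ← lintegral_iSup (fun n => (φ n).measurable) hmono, hsup]
    _ = ⨆ n, ∫⁻ ω, epsi (∫⁻ p, φ n p ∂N ω) ∂P :=
        lintegral_iSup (fun n => measurable_epsi.comp (hN.measurable_lintegral (φ n).measurable))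
          fun n m hnm ω => monotone_epsi (lintegral_mono (hmono hnm))
    _ = ⨆ n, epsi (∫⁻ p, epsi (φ n p) ∂μ) := by
        simp_rw [hN.lintegral_epsi_lintegral_simpleFunc _ (hφ_ne_top _) (hφ_supp _)]
    _ = epsi (∫⁻ p, epsi (F p) ∂μ) := by
        rw [← epsi_iSup, ← lintegral_iSup (f := fun n p => epsi (φ n p))
          (fun n => measurable_epsi.comp (φ n).measurable)
          fun n m hnm p => monotone_epsi (hmono hnm p)]
        simp_rw [← epsi_iSup, hsup]

end IsPoissonPP

lemma setLIntegral_prod_comp_snd {α β : Type*} [MeasurableSpace α] [MeasurableSpace β]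
    {μ : Measure α} {ν : Measure β} [SFinite μ] [SFinite ν] {f : β → ℝ≥0∞} (hf : Measurable f)
    (s : Set α) (t : Set β) :
    ∫⁻ p in s ×ˢ t, f p.2 ∂μ.prod ν = μ s * ∫⁻ y in t, f y ∂ν := by
  rw [← Measure.prod_restrict,
    lintegral_prod (fun p : α × β => f p.2) (hf.comp measurable_snd).aemeasurable]
  simp only [setLIntegral_const]
  exact mul_comm _ _

/-- for a unit-rate Poisson process `{(σ_k, χ_k)}` on `ℝ₊²`
and measurable `g : ℝ₊ → [0,∞)`, with `η g = ∑_k g(χ_k) 1[σ_k ≤ 1]`, the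
expectation `E[min(1, η g)]` is finite and is comparable within a factor of 2
to `ψ(∫ ψ(g(y)) dy)`. -/
theorem expectation_min_one_poisson_sum_comparable
    {Ω : Type*} [MeasurableSpace Ω] (P : Measure Ω) [IsProbabilityMeasure P]
    (N : Ω → Measure (ℝ × ℝ))
    (hN : IsPoissonPP P (volume.restrict (Ici (0 : ℝ) ×ˢ Ici (0 : ℝ))) N)
    (g : ℝ → ℝ≥0) (hg : Measurable g) :
    (∫⁻ ω, min 1 (∫⁻ p in Icc (0 : ℝ) 1 ×ˢ (univ : Set ℝ),
        (g p.2 : ℝ≥0∞) ∂(N ω)) ∂P < ∞) ∧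
    epsi (∫⁻ y in Ici (0 : ℝ), epsi (g y : ℝ≥0∞))
      ≤ ∫⁻ ω, min 1 (∫⁻ p in Icc (0 : ℝ) 1 ×ˢ (univ : Set ℝ),
          (g p.2 : ℝ≥0∞) ∂(N ω)) ∂P ∧
    ∫⁻ ω, min 1 (∫⁻ p in Icc (0 : ℝ) 1 ×ˢ (univ : Set ℝ),
        (g p.2 : ℝ≥0∞) ∂(N ω)) ∂P
      ≤ 2 * epsi (∫⁻ y in Ici (0 : ℝ), epsi (g y : ℝ≥0∞)) := by
  have hS : MeasurableSet (Icc (0 : ℝ) 1 ×ˢ (univ : Set ℝ)) := measurableSet_Icc.prod .univ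
  have hG : Measurable fun p : ℝ × ℝ => (g p.2 : ℝ≥0∞) := by fun_prop
  have hηg := fun ω => lintegral_indicator hS (μ := N ω) (fun p : ℝ × ℝ => (g p.2 : ℝ≥0∞))
  have hlaplace : ∫⁻ ω, epsi (∫⁻ p in Icc (0 : ℝ) 1 ×ˢ (univ : Set ℝ), (g p.2 : ℝ≥0∞) ∂N ω) ∂P
      = epsi (∫⁻ y in Ici (0 : ℝ), epsi (g y : ℝ≥0∞)) := by
    simp_rw [← hηg]
    rw [hN.lintegral_epsi_lintegral (hG.indicator hS)]
    have hind : ∀ p, epsi ((Icc (0 : ℝ) 1 ×ˢ univ).indicator (fun p => (g p.2 : ℝ≥0∞)) p) =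
        (Icc (0 : ℝ) 1 ×ˢ univ).indicator (fun p => epsi (g p.2)) p := fun p =>
      (congrFun (indicator_comp_of_zero epsi_zero) p).symm
    rw [lintegral_congr hind, lintegral_indicator hS, Measure.restrict_restrict hS,
      prod_inter_prod, univ_inter, inter_eq_left.2 Icc_subset_Ici_self, Measure.volume_eq_prod,
      setLIntegral_prod_comp_snd (f := fun y => epsi (g y)) (by fun_prop), Real.volume_Icc]
    norm_num
  refine ⟨(lintegral_mono fun ω => min_le_left _ _).trans_lt (by simp), ?_, ?_⟩
  · exact hlaplace ▸ lintegral_mono fun ω => epsi_le_min_one _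
  · refine (lintegral_mono fun ω => min_one_le_two_mul_epsi _).trans_eq ?_
    rw [lintegral_const_mul' 2 _ ofNat_ne_top, hlaplace]
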